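/- Let f : ℝ^d → ℝ be convex and differentiable with (1/β)-Lipschitz continuous gradient, B an r×d real matrix, h : ℝ^r → ℝ ∪ {+∞} proper convex lower semicontinuous, 0 < γ ≤ β, and 0 < λ ≤ 1/ρ_max(BBᵀ); set G = (γ/(2λ))(I − λBBᵀ) and ‖v‖_G² = ⟨v, Gv⟩. Suppose (x*, v*) satisfies ∇f(x*) + Bᵀv* = 0 and h(v) − h(v*) − ⟨Bx*, v − v*⟩ ≥ 0 for all v ∈ ℝ^r. Starting from any x_0 ∈ ℝ^d, v_0 ∈ ℝ^r, generate the deterministic PDFP iterates: for k ≥ 0, y_{k+1} = x_k − γ∇f(x_k) − γBᵀv_k, v_{k+1} = the unique minimizer over v of (λ/γ)h(v) + ½‖v − ((λ/γ)B y_{k+1} + v_k)‖², x_{k+1} = x_k − γ∇f(x_k) − γBᵀv_{k+1}. Then for every K ≥ 1, with x̄_K = (1/K)Σ_{k=1}^K x_k and v̄_K = (1/K)Σ_{k=1}^K v_k, R(x̄_K, v̄_K) ≤ (‖x_0 − x*‖² + 2γ‖v_0 − v*‖_G²)/(2γK), where R(x, v) = f(x) − f(x*) − ⟨∇f(x*),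 x − x*⟩ + h(v) − h(v*) − ⟨Bx*, v − v*⟩. In particular the ergodic convergence rate of PDFP is O(1/K). -/

import Mathlib

/-
Along the iteration, the gradient step (convexity of `f` together with the descent lemma for
its `(1/β)`-Lipschitz gradient, using `γ ≤ β`) and the prox step (the variational inequality
of the minimizer) bound the gap `D_f(x_{k+1}, x*) + D_h(v_{k+1}, v*)` by the decrease of the
Lyapunov function `‖x_k − x*‖²/(2γ) + ‖v_k − v*‖²_G`: the coupling terms
`⟪B(x_{k+1} − x*), v_{k+1} − v*⟫` of the two steps cancel, and `λ BBᵀ ≤ I` makes `‖·‖_G²`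
nonnegative. Summing telescopes, and Jensen's inequality for the convex gap functions passes
to the ergodic averages.
-/

open scoped RealInnerProductSpace InnerProduct
open Set Filter Topology

theorem sum_range_le_of_le_sub_succ {R Φ : ℕ → ℝ} (hR : ∀ k, R k ≤ Φ k - Φ (k + 1)) {K : ℕ}
    (hΦ : 0 ≤ Φ K) : ∑ k ∈ Finset.range K, R k ≤ Φ 0 := by
  have := Finset.sum_le_sum fun k (_ : k ∈ Finset.range K) => hR k
  rw [Finset.sum_range_sub'] at this
  linarith

theorem nonneg_of_forall_add_mul_nonneg {C D : ℝ} (h : ∀ t ∈ Ioc (0 : ℝ) 1, 0 ≤ C + t * D) :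
    0 ≤ C := by
  have hlim : Tendsto (fun t : ℝ => C + t * D) (𝓝[>] 0) (𝓝 C) := by
    have hcont : Continuous fun t : ℝ => C + t * D := by fun_prop
    simpa using (hcont.tendsto 0).mono_left nhdsWithin_le_nhds
  exact ge_of_tendsto hlim (by filter_upwards [Ioc_mem_nhdsGT zero_lt_one] using h)

section Average

variable {E F : Type*} [AddCommGroup E] [Module ℝ E] [AddCommGroup F] [Module ℝ F]
  {s : Set E} {t : Set F} {φ : E → ℝ} {ψ : F → ℝ}

theorem ConvexOn.map_average_range_le (hφ : ConvexOn ℝ s φ) {K : ℕ}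
    (hK : K ≠ 0) {p : ℕ → E} (hp : ∀ k, p k ∈ s) :
    φ ((K : ℝ)⁻¹ • ∑ k ∈ Finset.range K, p k) ≤ (K : ℝ)⁻¹ * ∑ k ∈ Finset.range K, φ (p k) := by
  rw [Finset.smul_sum, Finset.mul_sum]
  refine hφ.map_sum_le (fun _ _ => by positivity) ?_ fun k _ => hp k
  simp [hK]

theorem ConvexOn.add_map_average_range_le_of_le_sub_succ (hφ : ConvexOn ℝ s φ)
    (hψ : ConvexOn ℝ t ψ) {p : ℕ → E} {q : ℕ → F} (hp : ∀ k, p k ∈ s) (hq : ∀ k, q k ∈ t)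
    {Φ : ℕ → ℝ} (hstep : ∀ k, φ (p k) + ψ (q k) ≤ Φ k - Φ (k + 1)) (hΦ : ∀ k, 0 ≤ Φ k) {K : ℕ}
    (hK : K ≠ 0) :
    φ ((K : ℝ)⁻¹ • ∑ k ∈ Finset.range K, p k) + ψ ((K : ℝ)⁻¹ • ∑ k ∈ Finset.range K, q k)
      ≤ (K : ℝ)⁻¹ * Φ 0 := by
  calc _ ≤ (K : ℝ)⁻¹ * ∑ k ∈ Finset.range K, φ (p k)
        + (K : ℝ)⁻¹ * ∑ k ∈ Finset.range K, ψ (q k) :=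
      add_le_add (hφ.map_average_range_le hK hp) (hψ.map_average_range_le hK hq)
    _ ≤ (K : ℝ)⁻¹ * Φ 0 := by
      rw [← mul_add, ← Finset.sum_add_distrib]
      exact mul_le_mul_of_nonneg_left (sum_range_le_of_le_sub_succ hstep (hΦ K)) (by positivity)

end Average

section InnerProductSpace

variable {E : Type*} [NormedAddCommGroup E] [InnerProductSpace ℝ E] {s : Set E} {φ : E → ℝ}

theorem two_mul_inner_sub_sub (a b c : E) :
    2 * ⟪a - b, b - c⟫ = ‖a - c‖ ^ 2 - ‖b - c‖ ^ 2 - ‖a - b‖ ^ 2 := by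
  have h := norm_add_sq_real (a - b) (b - c)
  rw [sub_add_sub_cancel] at h
  linarith

theorem ConvexOn.add_inner_le_of_isMinOn_add_half_sq (hφ : ConvexOn ℝ s φ) {w z u : E}
    (hz : z ∈ s) (hmin : IsMinOn (fun y => φ y + 1 / 2 * ‖y - w‖ ^ 2) s z) (hu : u ∈ s) :
    φ z + ⟪w - z, u - z⟫ ≤ φ u := by
  suffices 0 ≤ φ u - φ z - ⟪w - z, u - z⟫ by linarith
  refine nonneg_of_forall_add_mul_nonneg (D := 1 / 2 * ‖u - z‖ ^ 2) fun t ⟨ht0, ht1⟩ => ?_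
  have hseg : (1 - t) • z + t • u = z + t • (u - z) := by
    rw [sub_smul, one_smul, smul_sub]; abel
  have hmem : z + t • (u - z) ∈ s := hseg ▸ hφ.1 hz hu (by linarith) ht0.le (by ring)
  have hcvx : φ (z + t • (u - z)) ≤ (1 - t) * φ z + t * φ u :=
    hseg ▸ hφ.2 hz hu (by linarith) ht0.le (by ring)
  have hnorm : ‖z + t • (u - z) - w‖ ^ 2
      = ‖z - w‖ ^ 2 - 2 * t * ⟪w - z, u - z⟫ + t ^ 2 * ‖u - z‖ ^ 2 := by
    rw [show z + t • (u - z) - w = -(w - z) + t • (u - z) by abel, norm_add_sq_real,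
      norm_neg, inner_neg_left, real_inner_smul_right, norm_smul, Real.norm_eq_abs,
      abs_of_pos ht0, norm_sub_rev w z]
    ring
  have hle := isMinOn_iff.1 hmin _ hmem
  simp only [hnorm] at hle
  refine nonneg_of_mul_nonneg_right (a := t) ?_ ht0
  linarith

def bregmanDiv (φ : E → ℝ) (g x₀ x : E) : ℝ := φ x - φ x₀ - ⟪g, x - x₀⟫

theorem ConvexOn.bregmanDiv (hφ : ConvexOn ℝ s φ) (g x₀ : E) :
    ConvexOn ℝ s (bregmanDiv φ g x₀) := by
  have haff : ConcaveOn ℝ s fun x => innerₛₗ ℝ g x + (φ x₀ - ⟪g, x₀⟫) :=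
    ((innerₛₗ ℝ g).concaveOn hφ.1).add_const _
  have heq : _root_.bregmanDiv φ g x₀ = φ - fun x => innerₛₗ ℝ g x + (φ x₀ - ⟪g, x₀⟫) := by
    ext x
    simp only [_root_.bregmanDiv, Pi.sub_apply, innerₛₗ_apply_apply, inner_sub_right]
    ring
  exact heq ▸ hφ.sub haff

end InnerProductSpace

section Gradient

variable {E : Type*} [NormedAddCommGroup E] [InnerProductSpace ℝ E] [CompleteSpace E]
  {f : E → ℝ} {f' : E → E}

theorem HasGradientAt.hasDerivAt_comp_lineMap {g a b : E} {t : ℝ}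
    (hf : HasGradientAt f g (AffineMap.lineMap a b t)) :
    HasDerivAt (fun s : ℝ => f (AffineMap.lineMap a b s)) ⟪g, b - a⟫ t := by
  have h := hf.hasFDerivAt.comp_hasDerivAt t AffineMap.hasDerivAt_lineMap
  rwa [InnerProductSpace.toDual_apply_apply] at h

theorem ConvexOn.add_inner_le_of_hasGradientAt (hf : ConvexOn ℝ univ f) {g a : E}
    (hg : HasGradientAt f g a) (b : E) : f a + ⟪g, b - a⟫ ≤ f b := by
  have hline : ConvexOn ℝ univ (fun s : ℝ => f (AffineMap.lineMap a b s)) :=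
    hf.comp_affineMap (AffineMap.lineMap a b)
  have hd := HasGradientAt.hasDerivAt_comp_lineMap (t := 0) (b := b) (by simpa using hg)
  have := hline.le_slope_of_hasDerivAt (mem_univ 0) (mem_univ 1) zero_lt_one hd
  simp only [slope_def_field, AffineMap.lineMap_apply_one, AffineMap.lineMap_apply_zero] at this
  linarith

theorem le_add_inner_add_sq_of_lipschitz_gradient (hgrad : ∀ z, HasGradientAt f (f' z) z)
    {L : ℝ} (hLip : ∀ p q, ‖f' p - f' q‖ ≤ L * ‖p - q‖) (a b : E) :
    f b ≤ f a + ⟪f' a, b - a⟫ + L / 2 * ‖b - a‖ ^ 2 := by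
  set ψ : ℝ → ℝ := fun t =>
    f (AffineMap.lineMap a b t) - t * ⟪f' a, b - a⟫ - L / 2 * ‖b - a‖ ^ 2 * t ^ 2
  have hψ : ∀ t, HasDerivAt ψ
      (⟪f' (AffineMap.lineMap a b t) - f' a, b - a⟫ - L * ‖b - a‖ ^ 2 * t) t := fun t => by
    have h := (((hgrad (AffineMap.lineMap a b t)).hasDerivAt_comp_lineMap).sub
      (hasDerivAt_mul_const ⟪f' a, b - a⟫)).sub
      ((hasDerivAt_pow 2 t).const_mul (L / 2 * ‖b - a‖ ^ 2))
    exact h.congr_deriv (by rw [inner_sub_left]; ring)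
  have hanti : AntitoneOn ψ (Ici 0) := by
    refine antitoneOn_of_hasDerivWithinAt_nonpos (convex_Ici 0)
      (fun t _ => (hψ t).continuousAt.continuousWithinAt)
      (fun t _ => (hψ t).hasDerivWithinAt) fun t ht => ?_
    rw [interior_Ici, mem_Ioi] at ht
    have hdist : ‖f' (AffineMap.lineMap a b t) - f' a‖ ≤ L * (t * ‖b - a‖) := by
      simpa [AffineMap.lineMap_apply, norm_smul, abs_of_pos ht] using
        hLip (AffineMap.lineMap a b t) a
    nlinarith [real_inner_le_norm (f' (AffineMap.lineMap a b t) - f' a) (b - a),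
      mul_le_mul_of_nonneg_right hdist (norm_nonneg (b - a))]
  have := hanti (mem_Ici.2 le_rfl) (mem_Ici.2 zero_le_one) zero_le_one
  simp only [ψ, AffineMap.lineMap_apply_one, AffineMap.lineMap_apply_zero] at this
  linarith

end Gradient

section PDFP

variable {E F : Type*} [NormedAddCommGroup E] [InnerProductSpace ℝ E] [CompleteSpace E]
  [NormedAddCommGroup F] [InnerProductSpace ℝ F] [CompleteSpace F]
  {B : E →L[ℝ] F} {γ lam : ℝ}

/-- `‖u‖²_G` for the PDFP metric `G = (γ/(2λ))(I − λBB†)`. -/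
noncomputable def normSqG (γ lam : ℝ) (B : E →L[ℝ] F) (u : F) : ℝ :=
  γ / (2 * lam) * (‖u‖ ^ 2 - lam * ‖(B†) u‖ ^ 2)

theorem normSqG_nonneg (hγ : 0 ≤ γ) (hlam : 0 < lam) (hρ : ∀ u, lam * ‖(B†) u‖ ^ 2 ≤ ‖u‖ ^ 2)
    (u : F) : 0 ≤ normSqG γ lam B u :=
  mul_nonneg (by positivity) (sub_nonneg.2 (hρ u))

theorem div_mul_inner_sub_mul_inner_adjoint_eq (hlam : lam ≠ 0) (a b c : F) :
    γ / lam * ⟪a - b, b - c⟫ - γ * ⟪(B†) (a - b), (B†) (b - c)⟫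
      = normSqG γ lam B (a - c) - normSqG γ lam B (b - c) - normSqG γ lam B (a - b) := by
  have h := two_mul_inner_sub_sub a b c
  have hB := two_mul_inner_sub_sub ((B†) a) ((B†) b) ((B†) c)
  simp only [← map_sub] at hB
  simp only [normSqG]
  field_simp
  linear_combination γ * h - γ * lam * hB

variable {f : E → ℝ} {f' : E → E} {L : ℝ} {xstar x x' : E} {vstar v' : F}

theorem pdfp_primal_step (hf : ConvexOn ℝ univ f) (hgrad : ∀ z, HasGradientAt f (f' z) z)
    (hLip : ∀ p q, ‖f' p - f' q‖ ≤ L * ‖p - q‖) (hγ : 0 < γ) (hγL : γ * L ≤ 1)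
    (hopt : f' xstar + (B†) vstar = 0) (hx' : x' = x - γ • f' x - γ • (B†) v') :
    bregmanDiv f (f' xstar) xstar x'
      ≤ ‖x - xstar‖ ^ 2 / (2 * γ) - ‖x' - xstar‖ ^ 2 / (2 * γ)
        - ⟪B (x' - xstar), v' - vstar⟫ := by
  have hdesc := le_add_inner_add_sq_of_lipschitz_gradient hgrad hLip x x'
  have hcvx := hf.add_inner_le_of_hasGradientAt (hgrad x) xstar
  have hstep : f' x = γ⁻¹ • (x - x') - (B†) v' := by
    rw [hx', show x - (x - γ • f' x - γ • (B†) v') = γ • (f' x + (B†) v') by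
      rw [smul_add]; abel, smul_smul, inv_mul_cancel₀ hγ.ne', one_smul]
    abel
  have hinner : ⟪f' x, x' - xstar⟫ = γ⁻¹ * ⟪x - x', x' - xstar⟫ - ⟪B (x' - xstar), v'⟫ := by
    rw [hstep, inner_sub_left, real_inner_smul_left, ContinuousLinearMap.adjoint_inner_left,
      real_inner_comm (B (x' - xstar))]
  have hopt' : ⟪f' xstar, x' - xstar⟫ = -⟪B (x' - xstar), vstar⟫ := by
    rw [eq_neg_of_add_eq_zero_left hopt, inner_neg_left, ContinuousLinearMap.adjoint_inner_left,
      real_inner_comm (B (x' - xstar))]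
  have hthree : γ⁻¹ * ⟪x - x', x' - xstar⟫
      = ‖x - xstar‖ ^ 2 / (2 * γ) - ‖x' - xstar‖ ^ 2 / (2 * γ) - ‖x - x'‖ ^ 2 / (2 * γ) := by
    rw [← sub_div, ← sub_div, ← two_mul_inner_sub_sub]
    field_simp
  have hL : L / 2 * ‖x' - x‖ ^ 2 ≤ ‖x - x'‖ ^ 2 / (2 * γ) := by
    have hLγ : L / 2 ≤ (2 * γ)⁻¹ := by
      rw [← one_div, le_div_iff₀ (by positivity)]
      linarith
    rw [norm_sub_rev, div_eq_inv_mul (‖x - x'‖ ^ 2)]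
    exact mul_le_mul_of_nonneg_right hLγ (sq_nonneg _)
  have hsplit : ⟪f' x, x' - x⟫ = ⟪f' x, x' - xstar⟫ + ⟪f' x, xstar - x⟫ := by
    rw [← inner_add_right, sub_add_sub_cancel]
  rw [bregmanDiv, inner_sub_right (B (x' - xstar))]
  linarith

theorem pdfp_dual_step {S : Set F} {h : F → ℝ} (hh : ConvexOn ℝ S h) (hγ : 0 < γ) (hlam : 0 < lam)
    (hρ : ∀ u, lam * ‖(B†) u‖ ^ 2 ≤ ‖u‖ ^ 2) {y' : E} {v : F} (hvstar : vstar ∈ S) (hv' : v' ∈ S)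
    (hmin : IsMinOn (fun u => lam / γ * h u + 1 / 2 * ‖u - ((lam / γ) • B y' + v)‖ ^ 2) S v')
    (hy' : y' = x' + γ • (B†) (v' - v)) :
    bregmanDiv h (B xstar) vstar v'
      ≤ ⟪B (x' - xstar), v' - vstar⟫ + normSqG γ lam B (v - vstar)
        - normSqG γ lam B (v' - vstar) := by
  have hsub := (hh.smul (div_pos hlam hγ).le).add_inner_le_of_isMinOn_add_half_sq hv' hmin hvstar
  have hexp : ⟪(lam / γ) • B y' + v - v', vstar - v'⟫
      = -(lam / γ * ⟪B y', v' - vstar⟫) - ⟪v - v', v' - vstar⟫ := by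
    rw [add_sub_assoc, inner_add_left, real_inner_smul_left, ← neg_sub v' vstar, inner_neg_right,
      inner_neg_right]
    ring
  have hprox : h v' - h vstar ≤ ⟪B y', v' - vstar⟫ + γ / lam * ⟪v - v', v' - vstar⟫ := by
    have hscale : h v' - h vstar - ⟪B y', v' - vstar⟫ - γ / lam * ⟪v - v', v' - vstar⟫
        = γ / lam * (lam / γ * h v' + (-(lam / γ * ⟪B y', v' - vstar⟫) - ⟪v - v', v' - vstar⟫)
          - lam / γ * h vstar) := by
      field_simp
      ring
    have := mul_nonpos_of_nonneg_of_nonpos (div_pos hγ hlam).le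
      (sub_nonpos.2 (hexp ▸ hsub : lam / γ * h v' + _ ≤ lam / γ * h vstar))
    linarith
  have hBy : ⟪B y', v' - vstar⟫
      = ⟪B x', v' - vstar⟫ - γ * ⟪(B†) (v - v'), (B†) (v' - vstar)⟫ := by
    rw [hy', map_add, map_smul, inner_add_left, real_inner_smul_left,
      ← ContinuousLinearMap.adjoint_inner_right B ((B†) (v' - v)), ← neg_sub v v', map_neg,
      inner_neg_left]
    ring
  have hBx : ⟪B x', v' - vstar⟫ - ⟪B xstar, v' - vstar⟫ = ⟪B (x' - xstar), v' - vstar⟫ := by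
    rw [map_sub, inner_sub_left]
  have hthree := div_mul_inner_sub_mul_inner_adjoint_eq (B := B) (γ := γ) hlam.ne' v v' vstar
  have hG := normSqG_nonneg hγ.le hlam hρ (v - v')
  rw [bregmanDiv]
  linarith

end PDFP

theorem stmt_8_general {d r : ℕ}
    (f : EuclideanSpace ℝ (Fin d) → ℝ)
    (f' : EuclideanSpace ℝ (Fin d) → EuclideanSpace ℝ (Fin d))
    (hconv : ConvexOn ℝ Set.univ f)
    (hgrad : ∀ x, HasGradientAt f (f' x) x)
    (β : ℝ)
    (hLip : ∀ x y, ‖f' x - f' y‖ ≤ (1 / β) * ‖x - y‖)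
    (B : EuclideanSpace ℝ (Fin d) →L[ℝ] EuclideanSpace ℝ (Fin r))
    (S : Set (EuclideanSpace ℝ (Fin r)))
    (h : EuclideanSpace ℝ (Fin r) → ℝ)
    (hhconv : ConvexOn ℝ S h)
    (γ lam : ℝ) (hγ0 : 0 < γ) (hγβ : γ ≤ β) (hlam0 : 0 < lam)
    (hρmax : ∀ u : EuclideanSpace ℝ (Fin r),
      lam * ‖ContinuousLinearMap.adjoint B u‖ ^ 2 ≤ ‖u‖ ^ 2)
    (xstar : EuclideanSpace ℝ (Fin d)) (vstar : EuclideanSpace ℝ (Fin r))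
    (hvstar : vstar ∈ S)
    (hopt1 : f' xstar + ContinuousLinearMap.adjoint B vstar = 0)
    (x y : ℕ → EuclideanSpace ℝ (Fin d)) (v : ℕ → EuclideanSpace ℝ (Fin r))
    (hy : ∀ k : ℕ,
      y (k + 1) = x k - γ • f' (x k) - γ • ContinuousLinearMap.adjoint B (v k))
    (hvmem : ∀ k : ℕ, v (k + 1) ∈ S)
    (hvmin : ∀ k : ℕ, ∀ u ∈ S,
      (lam / γ) * h (v (k + 1))
          + (1 / 2) * ‖v (k + 1) - ((lam / γ) • B (y (k + 1)) + v k)‖ ^ 2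
        ≤ (lam / γ) * h u + (1 / 2) * ‖u - ((lam / γ) • B (y (k + 1)) + v k)‖ ^ 2)
    (hx : ∀ k : ℕ,
      x (k + 1) = x k - γ • f' (x k) - γ • ContinuousLinearMap.adjoint B (v (k + 1))) :
    ∀ K : ℕ, 1 ≤ K →
      ((f ((K : ℝ)⁻¹ • ∑ k ∈ Finset.range K, x (k + 1)) - f xstar
          - ⟪f' xstar, ((K : ℝ)⁻¹ • ∑ k ∈ Finset.range K, x (k + 1)) - xstar⟫)
        + (h ((K : ℝ)⁻¹ • ∑ k ∈ Finset.range K, v (k + 1)) - h vstar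
          - ⟪B xstar, ((K : ℝ)⁻¹ • ∑ k ∈ Finset.range K, v (k + 1)) - vstar⟫))
      ≤ (‖x 0 - xstar‖ ^ 2
          + 2 * γ * ((γ / (2 * lam)) * (‖v 0 - vstar‖ ^ 2
              - lam * ‖ContinuousLinearMap.adjoint B (v 0 - vstar)‖ ^ 2)))
        / (2 * γ * K) := by
  intro K hK
  have hγL : γ * (1 / β) ≤ 1 := by
    rw [mul_one_div, div_le_one (hγ0.trans_le hγβ)]
    exact hγβ
  set Φ : ℕ → ℝ := fun k => ‖x k - xstar‖ ^ 2 / (2 * γ) + normSqG γ lam B (v k - vstar)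
  have hstep : ∀ k, bregmanDiv f (f' xstar) xstar (x (k + 1))
      + bregmanDiv h (B xstar) vstar (v (k + 1)) ≤ Φ k - Φ (k + 1) := fun k => by
    have hyx : y (k + 1) = x (k + 1) + γ • (B†) (v (k + 1) - v k) := by
      rw [hy, hx, map_sub, smul_sub]
      abel
    have hprimal := pdfp_primal_step hconv hgrad hLip hγ0 hγL hopt1 (hx k)
    have hdual := pdfp_dual_step (xstar := xstar) hhconv hγ0 hlam0 hρmax hvstar (hvmem k)
      (isMinOn_iff.2 (hvmin k)) hyx
    simp only [Φ]
    linarith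
  have hΦ : ∀ k, 0 ≤ Φ k := fun k =>
    add_nonneg (by positivity) (normSqG_nonneg hγ0.le hlam0 hρmax _)
  calc _ = bregmanDiv f (f' xstar) xstar ((K : ℝ)⁻¹ • ∑ k ∈ Finset.range K, x (k + 1))
        + bregmanDiv h (B xstar) vstar ((K : ℝ)⁻¹ • ∑ k ∈ Finset.range K, v (k + 1)) := rfl
    _ ≤ (K : ℝ)⁻¹ * Φ 0 :=
      (hconv.bregmanDiv _ _).add_map_average_range_le_of_le_sub_succ (hhconv.bregmanDiv _ _)
        (fun _ => mem_univ _) hvmem hstep hΦ (by omega)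
    _ = _ := by
      simp only [Φ, normSqG]
      field_simp

/-- ergodic `O(1/K)` rate of the deterministic PDFP iteration.
For the iterates `y_{k+1} = x_k − γ∇f(x_k) − γBᵀv_k`,
`v_{k+1} = Prox_{(λ/γ)h}((λ/γ)B y_{k+1} + v_k)`,
`x_{k+1} = x_k − γ∇f(x_k) − γBᵀv_{k+1}` and the ergodic averages
`x̄_K = (1/K)Σ_{k=1}^K x_k`, `v̄_K = (1/K)Σ_{k=1}^K v_k`, one has
`R(x̄_K, v̄_K) ≤ (‖x_0 − x*‖² + 2γ‖v_0 − v*‖_G²)/(2γK)`.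
Here `h` (the conjugate `g*`) is modelled by a real-valued function on its
effective domain `S` and the prox is the (unique) minimizer over `S`;
`λ ≤ 1/ρ_max(BBᵀ)` is expressed as `λ‖Bᵀu‖² ≤ ‖u‖²`, and
`‖u‖_G² = (γ/(2λ))(‖u‖² − λ‖Bᵀu‖²)` for `G = (γ/(2λ))(I − λBBᵀ)`. -/
theorem stmt_8 {d r : ℕ}
    (f : EuclideanSpace ℝ (Fin d) → ℝ)
    (f' : EuclideanSpace ℝ (Fin d) → EuclideanSpace ℝ (Fin d))
    (hconv : ConvexOn ℝ Set.univ f)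
    (hgrad : ∀ x, HasGradientAt f (f' x) x)
    (β : ℝ)
    (hLip : ∀ x y, ‖f' x - f' y‖ ≤ (1 / β) * ‖x - y‖)
    (B : EuclideanSpace ℝ (Fin d) →L[ℝ] EuclideanSpace ℝ (Fin r))
    (S : Set (EuclideanSpace ℝ (Fin r)))
    (h : EuclideanSpace ℝ (Fin r) → ℝ)
    (hS : S.Nonempty) (hhconv : ConvexOn ℝ S h)
    (hlsc : LowerSemicontinuousOn h S)
    (γ lam : ℝ) (hγ0 : 0 < γ) (hγβ : γ ≤ β) (hlam0 : 0 < lam)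
    (hρmax : ∀ u : EuclideanSpace ℝ (Fin r),
      lam * ‖ContinuousLinearMap.adjoint B u‖ ^ 2 ≤ ‖u‖ ^ 2)
    (xstar : EuclideanSpace ℝ (Fin d)) (vstar : EuclideanSpace ℝ (Fin r))
    (hvstar : vstar ∈ S)
    (hopt1 : f' xstar + ContinuousLinearMap.adjoint B vstar = 0)
    (hopt2 : ∀ v ∈ S, h v - h vstar - ⟪B xstar, v - vstar⟫ ≥ 0)
    (x y : ℕ → EuclideanSpace ℝ (Fin d)) (v : ℕ → EuclideanSpace ℝ (Fin r))
    (hy : ∀ k : ℕ,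
      y (k + 1) = x k - γ • f' (x k) - γ • ContinuousLinearMap.adjoint B (v k))
    (hvmem : ∀ k : ℕ, v (k + 1) ∈ S)
    (hvmin : ∀ k : ℕ, ∀ u ∈ S,
      (lam / γ) * h (v (k + 1))
          + (1 / 2) * ‖v (k + 1) - ((lam / γ) • B (y (k + 1)) + v k)‖ ^ 2
        ≤ (lam / γ) * h u + (1 / 2) * ‖u - ((lam / γ) • B (y (k + 1)) + v k)‖ ^ 2)
    (hx : ∀ k : ℕ,
      x (k + 1) = x k - γ • f' (x k) - γ • ContinuousLinearMap.adjoint B (v (k + 1))) :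
    ∀ K : ℕ, 1 ≤ K →
      ((f ((K : ℝ)⁻¹ • ∑ k ∈ Finset.range K, x (k + 1)) - f xstar
          - ⟪f' xstar, ((K : ℝ)⁻¹ • ∑ k ∈ Finset.range K, x (k + 1)) - xstar⟫)
        + (h ((K : ℝ)⁻¹ • ∑ k ∈ Finset.range K, v (k + 1)) - h vstar
          - ⟪B xstar, ((K : ℝ)⁻¹ • ∑ k ∈ Finset.range K, v (k + 1)) - vstar⟫))
      ≤ (‖x 0 - xstar‖ ^ 2
          + 2 * γ * ((γ / (2 * lam)) * (‖v 0 - vstar‖ ^ 2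
              - lam * ‖ContinuousLinearMap.adjoint B (v 0 - vstar)‖ ^ 2)))
        / (2 * γ * K) :=
  stmt_8_general f f' hconv hgrad β hLip B S h hhconv γ lam hγ0 hγβ hlam0 hρmax xstar vstar hvstar
    hopt1 x y v hy hvmem hvmin hx
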